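/- arXiv:1101.5302 — 2 statements merged into one kernel-verified Lean document; each statement's English description precedes it below -/
import Mathlib

section
/- If a set of quartets Q defines a phylogenetic tree T (i.e., T is the unique phylogenetic tree on leaf set L(Q) displaying Q), then every interior edge of T is distinguished by at least one quartet in Q. -/
/-- A phylogenetic tree on label set `L`: a finite tree whose degree-1 vertices
(leaves) are bijectively labelled by `L`, and whose interior (non-leaf) vertices
have degree at least 3 (in particular, there are no degree-2 vertices). -/
structure PhyloTree (L : Type) : Type 1 where
  V : Type
  finV : Finite V
  G : SimpleGraph V
  isTree : G.IsTree
  leaf : L → V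
  leaf_inj : Function.Injective leaf
  leaf_deg : ∀ l, (G.neighborSet (leaf l)).ncard = 1
  leaf_of_deg_one : ∀ v, (G.neighborSet v).ncard = 1 → ∃ l, leaf l = v
  interior_deg : ∀ v, (¬ ∃ l, leaf l = v) → 3 ≤ (G.neighborSet v).ncard

namespace PhyloTree

variable {L : Type}

/-- A vertex is interior if it is not a leaf. -/
def IsInterior (T : PhyloTree L) (v : T.V) : Prop := ¬ ∃ l, T.leaf l = v

/-- A phylogenetic tree is binary if every interior vertex has degree exactly 3. -/
def Binary (T : PhyloTree L) : Prop :=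
  ∀ v, T.IsInterior v → (T.G.neighborSet v).ncard = 3

/-- `T` displays the quartet `uv|wx`: the path from `u` to `v` is
vertex-disjoint from the path from `w` to `x`. -/
def Displays (T : PhyloTree L) (u v w x : L) : Prop :=
  ∀ (p : T.G.Walk (T.leaf u) (T.leaf v)) (q : T.G.Walk (T.leaf w) (T.leaf x)),
    p.IsPath → q.IsPath → ∀ a, a ∈ p.support → a ∉ q.support

/-- A quartet `uv|wx` encoded as the tuple `(u, v, w, x)`. -/
abbrev Quartet (L : Type) := L × L × L × L

/-- The set of leaves appearing in a quartet. -/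
def qLeaves (q : Quartet L) : Set L := {q.1, q.2.1, q.2.2.1, q.2.2.2}

def DisplaysQ (T : PhyloTree L) (q : Quartet L) : Prop :=
  T.Displays q.1 q.2.1 q.2.2.1 q.2.2.2

def DisplaysSet (T : PhyloTree L) (Q : Set (Quartet L)) : Prop :=
  ∀ q ∈ Q, T.DisplaysQ q

/-- The edge `e` of `T` separates `{u, v}` from `{w, x}`: after deleting `e`,
`u` and `v` are in one component and `w` and `x` in the other. -/
def Separates (T : PhyloTree L) (e : Sym2 T.V) (u v w x : L) : Prop :=
  e ∈ T.G.edgeSet ∧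
  (T.G.deleteEdges {e}).Reachable (T.leaf u) (T.leaf v) ∧
  (T.G.deleteEdges {e}).Reachable (T.leaf w) (T.leaf x) ∧
  ¬ (T.G.deleteEdges {e}).Reachable (T.leaf u) (T.leaf w)

/-- The quartet `q = uv|wx` distinguishes the edge `e` of `T`:
`e` is the unique cut-edge of `T` separating `{u,v}` from `{w,x}`. -/
def Distinguishes (T : PhyloTree L) (q : Quartet L) (e : Sym2 T.V) : Prop :=
  T.Separates e q.1 q.2.1 q.2.2.1 q.2.2.2 ∧
  ∀ e', T.Separates e' q.1 q.2.1 q.2.2.1 q.2.2.2 → e' = e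

/-- An interior edge: both endpoints are interior vertices. -/
def InteriorEdge (T : PhyloTree L) (e : Sym2 T.V) : Prop :=
  e ∈ T.G.edgeSet ∧ ∀ v ∈ e, T.IsInterior v

/-- Label-preserving isomorphism of phylogenetic trees. -/
def PIso (T T' : PhyloTree L) : Prop :=
  ∃ φ : T.V ≃ T'.V,
    (∀ a b, T.G.Adj a b ↔ T'.G.Adj (φ a) (φ b)) ∧ ∀ l, φ (T.leaf l) = T'.leaf l

/-- The quartet set `Q` defines `T`: `T` displays `Q` and is the unique
phylogenetic tree on the leaf set `L` doing so. -/
def Defines (Q : Set (Quartet L)) (T : PhyloTree L) : Prop :=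
  T.DisplaysSet Q ∧ ∀ T' : PhyloTree L, T'.DisplaysSet Q → PIso T' T

end PhyloTree

/-- Adjacency of the caterpillar graph on `n` leaves (labels `Fin n`, so label
`i` of `{1,…,n}` corresponds to `i - 1 : Fin n`) with interior path
`Fin (n-2)`: leaves `0,1` attach to interior vertex `0`, leaf `k`
(for `2 ≤ k ≤ n-3`) to interior vertex `k-1`, and leaves `n-2, n-1` to
interior vertex `n-3`. -/
def catAdj (n : ℕ) : (Fin n ⊕ Fin (n - 2)) → (Fin n ⊕ Fin (n - 2)) → Prop
  | Sum.inl k, Sum.inr j => (j : ℕ) = min ((k : ℕ) - 1) (n - 3)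
  | Sum.inr j, Sum.inl k => (j : ℕ) = min ((k : ℕ) - 1) (n - 3)
  | Sum.inr j, Sum.inr j' => (j : ℕ) + 1 = (j' : ℕ) ∨ (j' : ℕ) + 1 = (j : ℕ)
  | _, _ => False

/-- The caterpillar graph on `n` leaves. -/
def catGraph (n : ℕ) : SimpleGraph (Fin n ⊕ Fin (n - 2)) where
  Adj a b := catAdj n a b
  symm := by
    constructor
    rintro (k | j) (k' | j') h <;> simp only [catAdj] at h ⊢ <;> tauto
  loopless := by
    constructor
    rintro (k | j) h
    · exact h
    · simp only [catAdj] at h; omega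

/-- `T` is a caterpillar tree whose leaf labelled `σ k` occupies position `k`
(positions as in `catGraph`). -/
def IsCatWith {n : ℕ} (T : PhyloTree (Fin n)) (σ : Fin n → Fin n) : Prop :=
  ∃ φ : T.V ≃ (Fin n ⊕ Fin (n - 2)),
    (∀ a b, T.G.Adj a b ↔ (catGraph n).Adj (φ a) (φ b)) ∧
    ∀ k, φ (T.leaf (σ k)) = Sum.inl k

/-- `T` is the caterpillar tree `T_n` on labels `{1,…,n}` (as `Fin n`). -/
def IsCaterpillar {n : ℕ} (T : PhyloTree (Fin n)) : Prop := IsCatWith T id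

/-!
Suppose no quartet of `Q` distinguishes the interior edge `e = ab`. Every quartet of `Q` is
displayed by `T`, hence separated by some edge, and by assumption by some edge other than `e`.
Contracting `e` keeps all other edges and the sides they cut off, so the contracted tree `T / e`
(a phylogenetic tree again: the merged vertex has degree `deg a + deg b - 2 ≥ 4`) still displays
every quartet of `Q`. But `T / e` has one vertex fewer than `T`, so it is not isomorphic to `T`,
contradicting that `Q` defines `T`.
-/

namespace SimpleGraph

variable {V W : Type*} {G : SimpleGraph V} {H : SimpleGraph W}

lemma IsAcyclic.not_adj_of_adj_of_adj (hG : G.IsAcyclic) {x y z : V} (hxy : G.Adj x y)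
    (hyz : G.Adj y z) : ¬ G.Adj x z := by
  classical
  intro hxz
  have hp : (Walk.cons hxy (Walk.cons hyz Walk.nil)).IsPath := by
    simp [hxy.ne, hyz.ne, hxz.ne]
  exact hyz.ne (hG.eq_snd_of_adj_start hp hxz (by simp)).symm

lemma IsAcyclic.reachable_deleteEdges_iff (hG : G.IsAcyclic) {u v : V} {p : G.Walk u v}
    (hp : p.IsPath) {f : Sym2 V} : (G.deleteEdges {f}).Reachable u v ↔ f ∉ p.edges := by
  classical
  induction f using Sym2.ind with
  | _ x y =>
  rw [reachable_deleteEdges_iff_exists_walk]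
  refine ⟨fun ⟨q, hq⟩ hf => hq ?_, fun hf => ⟨p, hf⟩⟩
  have : p = q.bypass := congrArg Subtype.val
    ((hG.subsingleton_path u v).elim ⟨p, hp⟩ ⟨q.bypass, q.bypass_isPath⟩)
  exact q.edges_bypass_subset_edges (this ▸ hf)

lemma Walk.reachable_deleteEdges_of_mem_support {u v z : V} (p : G.Walk u v) {f : Sym2 V}
    (hf : f ∉ p.edges) (hz : z ∈ p.support) : (G.deleteEdges {f}).Reachable u z := by
  classical
  refine ⟨(p.takeUntil z hz).toDeleteEdges {f} fun g hg => ?_⟩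
  rintro rfl
  exact hf (p.edges_takeUntil_subset_edges hz hg)

lemma Reachable.map_of_eq_or_adj (φ : V → W)
    (hφ : ∀ ⦃x y⦄, G.Adj x y → φ x = φ y ∨ H.Adj (φ x) (φ y)) {x y : V}
    (h : G.Reachable x y) : H.Reachable (φ x) (φ y) := by
  obtain ⟨p⟩ := h
  induction p with
  | nil => rfl
  | cons hadj _ ih => exact (hφ hadj).elim (fun h => h ▸ ih) (fun h => h.reachable.trans ih)

lemma Reachable.of_map_of_lift (φ : V → W)
    (hfib : ∀ ⦃x y⦄, φ x = φ y → G.Reachable x y)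
    (hlift : ∀ ⦃X Y⦄, H.Adj X Y → ∃ x y, G.Adj x y ∧ φ x = X ∧ φ y = Y)
    {x y : V} (h : H.Reachable (φ x) (φ y)) : G.Reachable x y := by
  suffices ∀ {X Y} (p : H.Walk X Y) x y, φ x = X → φ y = Y → G.Reachable x y from
    this h.some x y rfl rfl
  intro X Y p
  induction p with
  | nil => exact fun x y hx hy => hfib (hx.trans hy.symm)
  | cons hadj _ ih =>
    intro x y hx hy
    obtain ⟨x', z', h', hx', hz'⟩ := hlift hadj
    exact (hfib (hx.trans hx'.symm)).trans (h'.reachable.trans (ih z' y hz' hy))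

variable {a b : V}

open Classical in
noncomputable def contractMap (hab : a ≠ b) (v : V) : {v // v ≠ b} :=
  if h : v = b then ⟨a, hab⟩ else ⟨v, h⟩

lemma contractMap_of_ne (hab : a ≠ b) {v : V} (hv : v ≠ b) : contractMap hab v = ⟨v, hv⟩ :=
  dif_neg hv

lemma contractMap_coe (hab : a ≠ b) (X : {v // v ≠ b}) : contractMap hab X = X :=
  contractMap_of_ne hab X.2

lemma contractMap_eq_iff (hab : a ≠ b) {x y : V} :
    contractMap hab x = contractMap hab y ↔ x = y ∨ s(x, y) = s(a, b) := by
  unfold contractMap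
  split_ifs <;> simp [Subtype.ext_iff] <;> grind

def contract (G : SimpleGraph V) (hab : a ≠ b) : SimpleGraph {v // v ≠ b} where
  Adj X Y := X ≠ Y ∧ ∃ x y, G.Adj x y ∧ contractMap hab x = X ∧ contractMap hab y = Y
  symm := ⟨fun _ _ ⟨hne, x, y, h, hx, hy⟩ => ⟨hne.symm, y, x, h.symm, hy, hx⟩⟩
  loopless := ⟨fun _ h => h.1 rfl⟩

lemma contract_adj_contractMap (hab : a ≠ b) {x y : V} (hxy : G.Adj x y)
    (he : s(x, y) ≠ s(a, b)) : (G.contract hab).Adj (contractMap hab x) (contractMap hab y) :=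
  ⟨by simp [contractMap_eq_iff, hxy.ne, he], x, y, hxy, rfl, rfl⟩

lemma injOn_map_contractMap (hG : G.IsAcyclic) (hab : G.Adj a b) :
    Set.InjOn (Sym2.map (contractMap hab.ne)) (G.edgeSet \ {s(a, b)}) := by
  intro e he f hf h
  induction e using Sym2.ind with | _ x y =>
  induction f using Sym2.ind with | _ u v =>
  -- edges `za` and `zb` merged by the contraction would form a triangle with `ab`
  have hbz : ∀ z, G.Adj b z → ¬ G.Adj a z := fun _ => hG.not_adj_of_adj_of_adj hab
  simp only [Set.mem_sdiff, Set.mem_singleton_iff, mem_edgeSet, Sym2.map_mk, Sym2.eq_iff,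
    contractMap_eq_iff] at *
  grind [G.adj_symm]

lemma reachable_deleteEdges_contract_iff (hG : G.IsAcyclic) (hab : G.Adj a b) {f : Sym2 V}
    (hf : f ∈ G.edgeSet) (hfe : f ≠ s(a, b)) {x y : V} :
    ((G.contract hab.ne).deleteEdges {f.map (contractMap hab.ne)}).Reachable
        (contractMap hab.ne x) (contractMap hab.ne y) ↔
      (G.deleteEdges {f}).Reachable x y := by
  constructor
  · refine Reachable.of_map_of_lift (contractMap hab.ne) (fun x y hxy => ?_)
      (fun X Y hXY => ?_)
    · obtain rfl | hxy := (contractMap_eq_iff hab.ne).mp hxy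
      · rfl
      · refine Adj.reachable (deleteEdges_adj.mpr ⟨?_, by simpa [hxy] using hfe.symm⟩)
        rcases Sym2.eq_iff.mp hxy with ⟨rfl, rfl⟩ | ⟨rfl, rfl⟩
        exacts [hab, hab.symm]
    · obtain ⟨⟨-, x, y, hxy, rfl, rfl⟩, hne⟩ := deleteEdges_adj.mp hXY
      refine ⟨x, y, deleteEdges_adj.mpr ⟨hxy, ?_⟩, rfl, rfl⟩
      rintro rfl
      exact hne rfl
  · refine Reachable.map_of_eq_or_adj (contractMap hab.ne) fun x y hxy => ?_
    obtain ⟨hxy, hxyf⟩ := deleteEdges_adj.mp hxy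
    by_cases hxye : s(x, y) = s(a, b)
    · exact .inl ((contractMap_eq_iff hab.ne).mpr (.inr hxye))
    refine .inr (deleteEdges_adj.mpr
      ⟨contract_adj_contractMap hab.ne hxy hxye, fun h => hxyf ?_⟩)
    rw [Set.mem_singleton_iff] at h ⊢
    exact injOn_map_contractMap hG hab ⟨hxy, hxye⟩ ⟨hf, hfe⟩ h

lemma IsTree.contract (hG : G.IsTree) (hab : G.Adj a b) : (G.contract hab.ne).IsTree := by
  refine ⟨(connected_iff _).mpr ⟨fun X Y => ?_, ⟨contractMap hab.ne a⟩⟩, ?_⟩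
  · rw [← contractMap_coe hab.ne X, ← contractMap_coe hab.ne Y]
    refine (hG.connected X Y).map_of_eq_or_adj _ fun x y hxy => ?_
    by_cases h : contractMap hab.ne x = contractMap hab.ne y
    exacts [.inl h, .inr ⟨h, x, y, hxy, rfl, rfl⟩]
  · refine isAcyclic_iff_forall_adj_isBridge.mpr fun X Y ⟨hXY, x, y, hxy, hx, hy⟩ => ?_
    subst hx hy
    have hxye : s(x, y) ≠ s(a, b) := fun h => hXY ((contractMap_eq_iff hab.ne).mpr (.inr h))
    rw [isBridge_iff, ← Sym2.map_mk,
      reachable_deleteEdges_contract_iff hG.isAcyclic hab hxy hxye, ← isBridge_iff]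
    exact isAcyclic_iff_forall_adj_isBridge.mp hG.isAcyclic hxy

lemma neighborSet_contract_of_ne (hab : a ≠ b) {v : V} (hva : v ≠ a) (hvb : v ≠ b) :
    (G.contract hab).neighborSet (contractMap hab v) = contractMap hab '' G.neighborSet v := by
  ext Y
  simp only [mem_neighborSet, contract, Set.mem_image]
  constructor
  · rintro ⟨-, x, y, hxy, hx, rfl⟩
    obtain rfl | h := (contractMap_eq_iff hab).mp hx
    · exact ⟨y, hxy, rfl⟩
    · grind [Sym2.eq_iff]
  · rintro ⟨y, hvy, rfl⟩
    refine ⟨?_, v, y, hvy, rfl, rfl⟩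
    rw [Ne, contractMap_eq_iff]
    grind [Sym2.eq_iff, hvy.ne]

lemma neighborSet_contract_left (hab : a ≠ b) :
    (G.contract hab).neighborSet (contractMap hab a) =
      contractMap hab '' (G.neighborSet a \ {b} ∪ G.neighborSet b \ {a}) := by
  ext Y
  simp only [mem_neighborSet, contract, Set.mem_image, Set.mem_union, Set.mem_sdiff,
    Set.mem_singleton_iff]
  constructor
  · rintro ⟨hY, x, y, hxy, hx, rfl⟩
    rw [Ne, contractMap_eq_iff] at hY
    rw [contractMap_eq_iff] at hx
    refine ⟨y, ?_, rfl⟩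
    grind [Sym2.eq_iff]
  · rintro ⟨y, hy, rfl⟩
    refine ⟨?_, ?_⟩
    · rw [Ne, contractMap_eq_iff]
      grind [Sym2.eq_iff, Adj.ne]
    · rcases hy with ⟨hay, -⟩ | ⟨hby, -⟩
      exacts [⟨a, y, hay, rfl, rfl⟩,
        ⟨b, y, hby, (contractMap_eq_iff hab).mpr (.inr Sym2.eq_swap), rfl⟩]

lemma ncard_neighborSet_contract_of_ne (hG : G.IsAcyclic) (hab : G.Adj a b) {v : V}
    (hva : v ≠ a) (hvb : v ≠ b) :
    ((G.contract hab.ne).neighborSet (contractMap hab.ne v)).ncard =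
      (G.neighborSet v).ncard := by
  rw [neighborSet_contract_of_ne hab.ne hva hvb]
  refine Set.InjOn.ncard_image fun y hy y' hy' h => ?_
  obtain rfl | h := (contractMap_eq_iff hab.ne).mp h
  · rfl
  exfalso
  rcases Sym2.eq_iff.mp h with ⟨rfl, rfl⟩ | ⟨rfl, rfl⟩
  exacts [hG.not_adj_of_adj_of_adj hy hab hy', hG.not_adj_of_adj_of_adj hy' hab hy]

lemma ncard_neighborSet_contract_left [Finite V] (hG : G.IsAcyclic) (hab : G.Adj a b) :
    ((G.contract hab.ne).neighborSet (contractMap hab.ne a)).ncard + 2 =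
      (G.neighborSet a).ncard + (G.neighborSet b).ncard := by
  have hinj : Set.InjOn (contractMap hab.ne) {v | v ≠ b} := fun x hx y hy h => by
    simpa [contractMap_of_ne hab.ne hx, contractMap_of_ne hab.ne hy] using h
  have hdisj : Disjoint (G.neighborSet a \ {b}) (G.neighborSet b \ {a}) :=
    Set.disjoint_left.mpr fun _ hya hyb => hG.not_adj_of_adj_of_adj hab hyb.1 hya.1
  have hsub : G.neighborSet a \ {b} ∪ G.neighborSet b \ {a} ⊆ {v | v ≠ b} := by
    rintro y (⟨-, hy⟩ | ⟨hy, -⟩)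
    exacts [hy, (G.ne_of_adj hy).symm]
  rw [neighborSet_contract_left, (hinj.mono hsub).ncard_image,
    Set.ncard_union_eq hdisj (Set.toFinite _) (Set.toFinite _),
    ← Set.ncard_sdiff_singleton_add_one (show b ∈ G.neighborSet a from hab) (Set.toFinite _),
    ← Set.ncard_sdiff_singleton_add_one (show a ∈ G.neighborSet b from hab.symm)
      (Set.toFinite _)]
  omega

end SimpleGraph

namespace PhyloTree

open SimpleGraph

variable {L : Type} (T : PhyloTree L)

lemma displays_of_separates {f : Sym2 T.V} {u v w x : L} (h : T.Separates f u v w x) :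
    T.Displays u v w x := by
  obtain ⟨-, huv, hwx, huw⟩ := h
  intro p q hp hq z hzp hzq
  have hfp := (T.isTree.isAcyclic.reachable_deleteEdges_iff hp).mp huv
  have hfq := (T.isTree.isAcyclic.reachable_deleteEdges_iff hq).mp hwx
  exact huw ((p.reachable_deleteEdges_of_mem_support hfp hzp).trans
    (q.reachable_deleteEdges_of_mem_support hfq hzq).symm)

lemma exists_separates_of_displays {u v w x : L} (h : T.Displays u v w x) :
    ∃ f, T.Separates f u v w x := by
  obtain ⟨p, hp, -⟩ := T.isTree.existsUnique_path (T.leaf u) (T.leaf v)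
  obtain ⟨q, hq, -⟩ := T.isTree.existsUnique_path (T.leaf w) (T.leaf x)
  obtain ⟨r, hr, -⟩ := T.isTree.existsUnique_path (T.leaf u) (T.leaf w)
  have hdisj := h p q hp hq
  -- the separating edge is where the path from `u` to `w` leaves the path from `u` to `v`
  obtain ⟨d, hd, hfst, hsnd⟩ := r.exists_boundary_dart {z | z ∈ p.support}
    p.start_mem_support fun hw => hdisj _ hw q.start_mem_support
  have hacyc := T.isTree.isAcyclic
  refine ⟨d.edge, d.edge_mem, (hacyc.reachable_deleteEdges_iff hp).mpr fun hdp => hsnd ?_,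
    (hacyc.reachable_deleteEdges_iff hq).mpr fun hdq => hdisj _ hfst ?_,
    fun hrw => (hacyc.reachable_deleteEdges_iff hr).mp hrw (List.mem_map_of_mem hd)⟩
  · exact p.snd_mem_support_of_mem_edges hdp
  · exact q.fst_mem_support_of_mem_edges hdq

variable {T} {a b : T.V}

lemma four_le_ncard_neighborSet_contract (hab : T.G.Adj a b) (ha : T.IsInterior a)
    (hb : T.IsInterior b) : 4 ≤ ((T.G.contract hab.ne).neighborSet ⟨a, hab.ne⟩).ncard := by
  have := T.finV
  have hdeg := ncard_neighborSet_contract_left T.isTree.isAcyclic hab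
  rw [contractMap_of_ne hab.ne hab.ne] at hdeg
  have := T.interior_deg a ha
  have := T.interior_deg b hb
  omega

noncomputable def contract (hab : T.G.Adj a b) (ha : T.IsInterior a) (hb : T.IsInterior b) :
    PhyloTree L where
  V := {v // v ≠ b}
  finV := @Subtype.finite _ T.finV _
  G := T.G.contract hab.ne
  isTree := T.isTree.contract hab
  leaf l := contractMap hab.ne (T.leaf l)
  leaf_inj l m hlm := by
    obtain h | h := (contractMap_eq_iff hab.ne).mp hlm
    · exact T.leaf_inj h
    · have : T.leaf l = a ∨ T.leaf l = b := by grind [Sym2.eq_iff]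
      exact this.elim (fun h => (ha ⟨l, h⟩).elim) (fun h => (hb ⟨l, h⟩).elim)
  leaf_deg l := by
    rw [ncard_neighborSet_contract_of_ne T.isTree.isAcyclic hab (fun h => ha ⟨l, h⟩)
      (fun h => hb ⟨l, h⟩)]
    exact T.leaf_deg l
  leaf_of_deg_one X hX := by
    by_cases hXa : X.1 = a
    · obtain rfl : X = ⟨a, hab.ne⟩ := Subtype.ext hXa
      have := four_le_ncard_neighborSet_contract hab ha hb
      omega
    rw [← contractMap_coe hab.ne X,
      ncard_neighborSet_contract_of_ne T.isTree.isAcyclic hab hXa X.2] at hX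
    obtain ⟨l, hl⟩ := T.leaf_of_deg_one _ hX
    exact ⟨l, by rw [hl, contractMap_coe]⟩
  interior_deg X hX := by
    by_cases hXa : X.1 = a
    · obtain rfl : X = ⟨a, hab.ne⟩ := Subtype.ext hXa
      have := four_le_ncard_neighborSet_contract hab ha hb
      omega
    rw [← contractMap_coe hab.ne X,
      ncard_neighborSet_contract_of_ne T.isTree.isAcyclic hab hXa X.2]
    exact T.interior_deg X fun ⟨l, hl⟩ => hX ⟨l, by rw [hl, contractMap_coe]⟩

lemma not_piso_contract (hab : T.G.Adj a b) (ha : T.IsInterior a) (hb : T.IsInterior b) :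
    ¬ PIso (T.contract hab ha hb) T := by
  rintro ⟨φ, -, -⟩
  have := T.finV
  obtain ⟨X, hX⟩ := Finite.surjective_of_injective
    (Subtype.val_injective.comp φ.symm.injective : Function.Injective (Subtype.val ∘ φ.symm)) b
  exact (φ.symm X).2 hX

lemma separates_contract (hab : T.G.Adj a b) (ha : T.IsInterior a) (hb : T.IsInterior b)
    {f : Sym2 T.V} {u v w x : L} (h : T.Separates f u v w x) (hfe : f ≠ s(a, b)) :
    (T.contract hab ha hb).Separates (f.map (contractMap hab.ne)) u v w x := by
  obtain ⟨hf, huv, hwx, huw⟩ := h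
  have key (y z : L) := reachable_deleteEdges_contract_iff T.isTree.isAcyclic hab hf hfe
    (x := T.leaf y) (y := T.leaf z)
  refine ⟨?_, (key u v).mpr huv, (key w x).mpr hwx, fun h => huw ((key u w).mp h)⟩
  induction f using Sym2.ind with
  | _ y z => exact contract_adj_contractMap hab.ne hf hfe

end PhyloTree

theorem stmt9_general {L : Type} (Q : Set (PhyloTree.Quartet L)) (T : PhyloTree L)
    (hdef : PhyloTree.Defines Q T) :
    ∀ e : Sym2 T.V, T.InteriorEdge e → ∃ q ∈ Q, T.Distinguishes q e := by
  rintro e ⟨he, hint⟩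
  induction e using Sym2.ind with | _ a b =>
  by_contra! hnd
  have ha := hint a (Sym2.mem_mk_left a b)
  have hb := hint b (Sym2.mem_mk_right a b)
  refine T.not_piso_contract he ha hb (hdef.2 _ fun q hq => ?_)
  obtain ⟨f, hf, hfe⟩ : ∃ f, T.Separates f q.1 q.2.1 q.2.2.1 q.2.2.2 ∧ f ≠ s(a, b) := by
    by_contra! hall
    obtain ⟨f, hf⟩ := T.exists_separates_of_displays (hdef.1 q hq)
    exact hnd q hq ⟨hall f hf ▸ hf, hall⟩
  exact PhyloTree.displays_of_separates _ (T.separates_contract he ha hb hf hfe)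

/-- If `Q` defines `T`, then every interior edge of `T` is distinguished by some
quartet in `Q`.  (The hypothesis `hcov` says the leaf set of `T` is `L(Q)`.) -/
theorem stmt9 {L : Type} (Q : Set (PhyloTree.Quartet L)) (T : PhyloTree L)
    (hcov : ∀ l : L, ∃ q ∈ Q, l ∈ PhyloTree.qLeaves q)
    (hdef : PhyloTree.Defines Q T) :
    ∀ e : Sym2 T.V, T.InteriorEdge e → ∃ q ∈ Q, T.Distinguishes q e :=
  stmt9_general Q T hdef
end

section
/- The quartet set Q6 = {12|35, 13|46, 12|56, 24|56} is minimally definitive for T6: Q6 defines T6, but for each q in Q6, the set Q6 − q does not define T6. In particular, the tree T' on leaf set {1,…,6} with cherries {2,4} and {5,3} at the ends of an interior path and leaves 6 and 1 attached to the middle two interior vertices displays Q6 − {12|56} and is distinct from T6. -/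
/-- `Q6 = {12|35, 13|46, 12|56, 24|56}` with labels shifted to `Fin 6`. -/
def Q6 : Set (PhyloTree.Quartet (Fin 6)) := {(0,1,2,4), (0,2,3,5), (0,1,4,5), (1,3,4,5)}

/-- The leaf arrangement of the tree `T'` from the paper: positions along the
caterpillar shape carry labels `2, 4, 6, 1, 5, 3` (shifted to `Fin 6`). -/
def sigma' : Fin 6 → Fin 6 := ![1, 3, 5, 0, 4, 2]

/-!
In a tree, write `interval u v` for the vertex set of the `u`–`v` path; `ab|cd` says that two such
sets are disjoint. Medians of three vertices give the closure rules for quartets (in particular the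
dyadic rule `ab|cd, ac|de ⊢ ab|de`) and the four-point condition: `ab|cd` and `ac|bd` never hold
together.

If `T` displays `Q6`, the closure rules yield `0i|j5` for `1 ≤ i < j ≤ 4`, `01|23` and `23|45`. So the
neighbours of the leaves `1, 2, 3, 4` are four distinct interior vertices. A degree count shows that
a phylogenetic tree on six leaves has at most four interior vertices, so these are all of them. The
same splits then determine where leaves `0` and `5` attach and which interior vertices are
adjacent, and this is exactly `T6`.

A caterpillar displays `ab|cd` when `a, b` hang strictly before `c, d` on its spine. For each
`q ∈ Q6`, the caterpillar with two neighbouring leaves swapped (for `q = 01|45`, the arrangement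
`sigma'`) displays `Q6 - q` and a quartet `ac|bd` whose partner `ab|cd` is displayed by `T6`.
By the four-point condition it is not isomorphic to `T6`.
-/

open SimpleGraph PhyloTree

namespace SimpleGraph

variable {V : Type*} {G : SimpleGraph V}

/-- The vertices lying on every walk from `u` to `v`; in a tree, the vertices of the `u`–`v` path. -/
def interval (G : SimpleGraph V) (u v : V) : Set V := {x | ∀ p : G.Walk u v, x ∈ p.support}

/-- The quartet `ab|cd`. -/
def Splits (G : SimpleGraph V) (a b c d : V) : Prop := Disjoint (G.interval a b) (G.interval c d)

lemma start_mem_interval (u v : V) : u ∈ G.interval u v := fun p => p.start_mem_support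

lemma end_mem_interval (u v : V) : v ∈ G.interval u v := fun p => p.end_mem_support

lemma interval_comm (u v : V) : G.interval u v = G.interval v u := by
  ext x
  exact ⟨fun h p => by simpa using h p.reverse, fun h p => by simpa using h p.reverse⟩

lemma interval_subset_support_of_mem {u v x y : V} (p : G.Walk u v) (hx : x ∈ p.support)
    (hy : y ∈ p.support) : G.interval x y ⊆ {z | z ∈ p.support} := by
  classical
  intro z hz
  have := hz ((p.takeUntil x hx).reverse.append (p.takeUntil y hy))
  rw [Walk.mem_support_append_iff, Walk.support_reverse, List.mem_reverse] at this
  exact this.elim (fun h => p.support_takeUntil_subset_support hx h)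
    (fun h => p.support_takeUntil_subset_support hy h)

lemma IsAcyclic.mem_interval_iff (hG : G.IsAcyclic) {u v x : V} {p : G.Walk u v}
    (hp : p.IsPath) : x ∈ G.interval u v ↔ x ∈ p.support := by
  classical
  refine ⟨fun h => h p, fun h q => ?_⟩
  have : p = q.bypass :=
    congrArg Subtype.val ((hG.subsingleton_path u v).elim ⟨p, hp⟩ ⟨q.bypass, q.bypass_isPath⟩)
  exact q.support_bypass_subset_support (this ▸ h)

lemma IsAcyclic.eq_of_le_of_connected {H : SimpleGraph V} (hG : G.IsAcyclic) (hle : H ≤ G)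
    (hH : H.Connected) : H = G := by
  ext x y
  refine ⟨fun h => hle h, fun h => ?_⟩
  obtain ⟨q, hq⟩ := (hH.preconnected x y).exists_isPath
  have := hG.subsingleton_path x y |>.elim ⟨q.mapLe hle, hq.mapLe hle⟩ (.singleton h)
  exact Walk.adj_of_length_eq_one (by simpa using congrArg (·.1.length) this)

lemma ncard_neighborSet_eq_degree (G : SimpleGraph V) (v : V) [Fintype (G.neighborSet v)] :
    (G.neighborSet v).ncard = G.degree v := by
  rw [← coe_neighborFinset, Set.ncard_coe_finset, card_neighborFinset_eq_degree]

lemma Splits.of_walks {a b c d : V} (p : G.Walk a b) (q : G.Walk c d)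
    (h : ∀ x ∈ p.support, x ∉ q.support) : G.Splits a b c d :=
  Set.disjoint_left.2 fun x hp hq => h x (hp p) (hq q)

lemma Splits.symm {a b c d : V} (h : G.Splits a b c d) : G.Splits c d a b :=
  Disjoint.symm h

lemma Splits.swap_left {a b c d : V} (h : G.Splits a b c d) : G.Splits b a c d := by
  rwa [Splits, interval_comm]

lemma Splits.swap_right {a b c d : V} (h : G.Splits a b c d) : G.Splits a b d c :=
  h.symm.swap_left.symm

lemma Iso.mem_interval {W : Type*} {H : SimpleGraph W} (e : G ≃g H) {a b x : V}
    (hx : e x ∈ H.interval (e a) (e b)) : x ∈ G.interval a b := by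
  intro p
  obtain ⟨y, hy, hyx⟩ := List.mem_map.1 (Walk.support_map e.toHom p ▸ hx (p.map e.toHom))
  exact e.injective hyx ▸ hy

lemma Iso.splits {W : Type*} {H : SimpleGraph W} (e : G ≃g H) {a b c d : V}
    (h : G.Splits a b c d) : H.Splits (e a) (e b) (e c) (e d) :=
  Set.disjoint_left.2 fun x h₁ h₂ => Set.disjoint_left.1 h
    (e.mem_interval (by rwa [e.apply_symm_apply])) (e.mem_interval (by rwa [e.apply_symm_apply]))

namespace IsTree

variable (hG : G.IsTree)
include hG

lemma exists_isPath (u v : V) : ∃ p : G.Walk u v, p.IsPath :=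
  (hG.connected.preconnected u v).exists_isPath

lemma interval_subset_interval {u v x y : V} (hx : x ∈ G.interval u v)
    (hy : y ∈ G.interval u v) : G.interval x y ⊆ G.interval u v := by
  obtain ⟨p, hp⟩ := hG.exists_isPath u v
  intro z hz
  rw [hG.isAcyclic.mem_interval_iff hp] at hx hy ⊢
  exact interval_subset_support_of_mem p hx hy hz

lemma interval_subset_union (u v w : V) :
    G.interval u w ⊆ G.interval u v ∪ G.interval v w := by
  obtain ⟨p, hp⟩ := hG.exists_isPath u v
  obtain ⟨q, hq⟩ := hG.exists_isPath v w
  intro x hx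
  rw [Set.mem_union, hG.isAcyclic.mem_interval_iff hp, hG.isAcyclic.mem_interval_iff hq]
  exact (Walk.mem_support_append_iff p q).1 (hx (p.append q))

lemma mem_interval_or_mem_interval_of_adj {x y : V} (hxy : G.Adj x y) (w : V) :
    x ∈ G.interval y w ∨ y ∈ G.interval x w := by
  obtain ⟨q, hq⟩ := hG.exists_isPath x w
  by_cases hy : y ∈ q.support
  · exact Or.inr ((hG.isAcyclic.mem_interval_iff hq).2 hy)
  · refine Or.inl ((hG.isAcyclic.mem_interval_iff ((q.cons_isPath_iff hxy.symm).2 ⟨hq, hy⟩)).2 ?_)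
    simp

lemma adj_of_interval_subset {x y : V} (hxy : x ≠ y) (h : G.interval x y ⊆ {x, y}) :
    G.Adj x y := by
  obtain ⟨p, hp⟩ := hG.exists_isPath x y
  cases p with
  | nil => exact absurd rfl hxy
  | cons hadj q =>
    rcases h ((hG.isAcyclic.mem_interval_iff hp).2 (List.mem_cons_of_mem _ q.start_mem_support))
      with h | h
    · exact absurd h hadj.ne'
    · exact h ▸ hadj

lemma exists_median (u v w : V) :
    ∃ m, m ∈ G.interval u v ∧ m ∈ G.interval u w ∧ m ∈ G.interval v w := by
  by_cases hu : u ∈ G.interval v w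
  · exact ⟨u, start_mem_interval u v, start_mem_interval u w, hu⟩
  obtain ⟨p, hp⟩ := hG.exists_isPath u v
  -- The `u`–`v` path leaves `interval u w \ interval v w` through an edge; its far end works.
  obtain ⟨d, hd, hd₁, hd₂⟩ := p.exists_boundary_dart (G.interval u w \ G.interval v w)
    ⟨start_mem_interval u w, hu⟩ (fun h => h.2 (start_mem_interval v w))
  have hsnd : d.snd ∈ G.interval u v :=
    (hG.isAcyclic.mem_interval_iff hp).2 (p.dart_snd_mem_support_of_mem_darts hd)
  have hvw : d.snd ∈ G.interval v w := by
    rcases hG.interval_subset_union u w v hsnd with h | h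
    · exact by_contra fun h' => hd₂ ⟨h, h'⟩
    · rwa [interval_comm]
  refine ⟨d.snd, hsnd, ?_, hvw⟩
  rcases hG.mem_interval_or_mem_interval_of_adj d.adj w with h | h
  · exact absurd (hG.interval_subset_interval hvw (end_mem_interval v w) h) hd₁.2
  · exact hG.interval_subset_interval hd₁.1 (end_mem_interval u w) h

lemma splits_trans_left {a m b c d : V} (h₁ : G.Splits a m c d) (h₂ : G.Splits m b c d) :
    G.Splits a b c d :=
  Set.disjoint_of_subset_left (hG.interval_subset_union a m b) (Disjoint.union_left h₁ h₂)

lemma splits_trans_right {a b c m d : V} (h₁ : G.Splits a b c m) (h₂ : G.Splits a b m d) :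
    G.Splits a b c d :=
  (hG.splits_trans_left h₁.symm h₂.symm).symm

lemma splits_dyadic {a b c d e : V} (h₁ : G.Splits a b c d) (h₂ : G.Splits a c d e) :
    G.Splits a b d e := by
  refine Set.disjoint_left.2 fun x hab hde => ?_
  obtain ⟨m, hac, had, hcd⟩ := hG.exists_median a c d
  rcases hG.interval_subset_union a x d had with h | h
  · exact Set.disjoint_left.1 h₁
      (hG.interval_subset_interval (start_mem_interval a b) hab h) hcd
  · exact Set.disjoint_left.1 h₂ hac
      (hG.interval_subset_interval hde (start_mem_interval d e) ((interval_comm x d) ▸ h))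

lemma not_splits_of_splits {a b c d : V} (h : G.Splits a b c d) : ¬ G.Splits a c b d := by
  intro h'
  obtain ⟨m, hab, hac, hbc⟩ := hG.exists_median a b c
  rcases hG.interval_subset_union b d c hbc with h₁ | h₁
  · exact Set.disjoint_left.1 h' hac h₁
  · exact Set.disjoint_left.1 h hab ((interval_comm d c) ▸ h₁)

end IsTree

end SimpleGraph

instance catGraph.decidableAdj (n : ℕ) : DecidableRel (catGraph n).Adj
  | .inl _, .inl _ => inferInstanceAs (Decidable False)
  | .inl k, .inr j => inferInstanceAs (Decidable ((j : ℕ) = min ((k : ℕ) - 1) (n - 3)))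
  | .inr j, .inl k => inferInstanceAs (Decidable ((j : ℕ) = min ((k : ℕ) - 1) (n - 3)))
  | .inr j, .inr j' => inferInstanceAs (Decidable ((j : ℕ) + 1 = j' ∨ (j' : ℕ) + 1 = j))

/-- The spine vertex carrying leaf `k` of the caterpillar (leaf `0` goes to `0` as `0 - 1 = 0`). -/
def catPos (n : ℕ) (k : Fin n) : ℕ := min ((k : ℕ) - 1) (n - 3)

lemma catPos_lt {n : ℕ} (hn : 3 ≤ n) (k : Fin n) : catPos n k < n - 2 := by
  unfold catPos
  omega

namespace catGraph

variable {n : ℕ}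

lemma adj_inl_inr {k : Fin n} {j : Fin (n - 2)} :
    (catGraph n).Adj (.inl k) (.inr j) ↔ (j : ℕ) = catPos n k := Iff.rfl

lemma adj_inr_inr {i j : Fin (n - 2)} :
    (catGraph n).Adj (.inr i) (.inr j) ↔ (i : ℕ) + 1 = j ∨ (j : ℕ) + 1 = i := Iff.rfl

lemma exists_walk_inr_inr (S : Set (Fin n ⊕ Fin (n - 2))) (i j : Fin (n - 2))
    (hS : ∀ k : Fin (n - 2), min (i : ℕ) j ≤ k → (k : ℕ) ≤ max (i : ℕ) j → .inr k ∈ S) :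
    ∃ p : (catGraph n).Walk (.inr i) (.inr j), ∀ x ∈ p.support, x ∈ S := by
  wlog hij : i ≤ j generalizing i j
  · obtain ⟨p, hp⟩ := this j i (by simpa only [min_comm, max_comm] using hS) (le_of_not_ge hij)
    exact ⟨p.reverse, by simpa using hp⟩
  obtain ⟨j, hj⟩ := j
  induction j with
  | zero =>
    obtain rfl : i = ⟨0, hj⟩ := Fin.ext (Nat.le_zero.1 hij)
    exact ⟨.nil, by simpa using hS _ (min_le_left _ _) (le_max_left _ _)⟩
  | succ j ih =>
    rcases eq_or_lt_of_le hij with rfl | hlt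
    · exact ⟨.nil, by simpa using hS _ (min_le_left _ _) (le_max_left _ _)⟩
    have hij' : (i : ℕ) ≤ j := Nat.lt_succ_iff.1 hlt
    obtain ⟨p, hp⟩ := ih (by omega)
      (fun k hk₁ hk₂ => hS k (by simp at hk₁ ⊢; omega) (by simp at hk₂ ⊢; omega)) hij'
    refine ⟨p.concat (adj_inr_inr.2 (Or.inl rfl)), fun x hx => ?_⟩
    rw [Walk.support_concat, List.mem_append, List.mem_singleton] at hx
    rcases hx with hx | rfl
    · exact hp x hx
    · exact hS _ (by simp) (by simp)

lemma exists_walk_inl_inl (hn : 3 ≤ n) (S : Set (Fin n ⊕ Fin (n - 2))) (a b : Fin n)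
    (ha : .inl a ∈ S) (hb : .inl b ∈ S)
    (hS : ∀ k : Fin (n - 2), min (catPos n a) (catPos n b) ≤ k →
      (k : ℕ) ≤ max (catPos n a) (catPos n b) → .inr k ∈ S) :
    ∃ p : (catGraph n).Walk (.inl a) (.inl b), ∀ x ∈ p.support, x ∈ S := by
  obtain ⟨q, hq⟩ := exists_walk_inr_inr S ⟨_, catPos_lt hn a⟩ ⟨_, catPos_lt hn b⟩ hS
  refine ⟨.cons (adj_inl_inr.2 rfl) (q.concat ((adj_inl_inr (k := b)).2 rfl).symm),
    fun x hx => ?_⟩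
  rw [Walk.support_cons, Walk.support_concat, List.mem_cons, List.mem_append,
    List.mem_singleton] at hx
  rcases hx with rfl | hx | rfl
  exacts [ha, hq x hx, hb]

lemma connected (hn : 3 ≤ n) : (catGraph n).Connected := by
  let o : Fin (n - 2) := ⟨0, by omega⟩
  have reach : ∀ v, (catGraph n).Reachable (.inr o) v := by
    rintro (b | j)
    · obtain ⟨p, -⟩ := exists_walk_inr_inr Set.univ o ⟨_, catPos_lt hn b⟩ fun _ _ _ => trivial
      exact ⟨p.concat ((adj_inl_inr (k := b)).2 rfl).symm⟩
    · obtain ⟨p, -⟩ := exists_walk_inr_inr Set.univ o j fun _ _ _ => trivial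
      exact ⟨p⟩
  have : Nonempty (Fin n ⊕ Fin (n - 2)) := ⟨.inr o⟩
  exact ⟨fun u v => (reach u).symm.trans (reach v)⟩

lemma splits {a b c d : Fin n}
    (hsep : max (catPos n a) (catPos n b) < min (catPos n c) (catPos n d)) :
    (catGraph n).Splits (.inl a) (.inl b) (.inl c) (.inl d) := by
  have hn : 3 ≤ n := by unfold catPos at hsep; omega
  obtain ⟨p, hp⟩ := exists_walk_inl_inl hn
    (Sum.elim (· ∈ ({a, b} : Set (Fin n))) (fun j => (j : ℕ) ≤ max (catPos n a) (catPos n b)))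
    a b (Or.inl rfl) (Or.inr rfl) (fun k _ hk => hk)
  obtain ⟨q, hq⟩ := exists_walk_inl_inl hn
    (Sum.elim (· ∈ ({c, d} : Set (Fin n))) (fun j => min (catPos n c) (catPos n d) ≤ j))
    c d (Or.inl rfl) (Or.inr rfl) (fun k hk _ => hk)
  refine Splits.of_walks p q fun x hxp hxq => ?_
  have h₁ := hp x hxp
  have h₂ := hq x hxq
  rcases x with k | j
  · change k ∈ ({a, b} : Set (Fin n)) at h₁
    change k ∈ ({c, d} : Set (Fin n)) at h₂
    simp only [Set.mem_insert_iff, Set.mem_singleton_iff] at h₁ h₂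
    rcases h₁ with rfl | rfl <;> rcases h₂ with rfl | rfl <;> omega
  · change (j : ℕ) ≤ _ at h₁
    change _ ≤ (j : ℕ) at h₂
    omega

lemma isTree_six : (catGraph 6).IsTree := by
  refine isTree_iff_connected_and_card.2 ⟨connected (by norm_num), ?_⟩
  rw [Nat.card_eq_fintype_card, ← edgeFinset_card, Nat.card_eq_fintype_card]
  decide

lemma degree_six_inl (k : Fin 6) : (catGraph 6).degree (.inl k) = 1 := by
  revert k
  decide

lemma degree_six_inr (j : Fin (6 - 2)) : (catGraph 6).degree (.inr j) = 3 := by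
  revert j
  decide

end catGraph

namespace PhyloTree

variable {L : Type} (T : PhyloTree L)

lemma displays_iff_splits {u v w x : L} :
    T.Displays u v w x ↔ T.G.Splits (T.leaf u) (T.leaf v) (T.leaf w) (T.leaf x) := by
  refine ⟨fun h => ?_, fun h p q hp hq y hy hy' => ?_⟩
  · obtain ⟨p, hp⟩ := T.isTree.exists_isPath (T.leaf u) (T.leaf v)
    obtain ⟨q, hq⟩ := T.isTree.exists_isPath (T.leaf w) (T.leaf x)
    exact Set.disjoint_left.2 fun y hy hy' => h p q hp hq y (hy p) (hy' q)
  · exact Set.disjoint_left.1 h ((T.isTree.isAcyclic.mem_interval_iff hp).2 hy)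
      ((T.isTree.isAcyclic.mem_interval_iff hq).2 hy')

/-- The unique neighbour of the leaf `l`. -/
noncomputable def parent (l : L) : T.V := (Set.ncard_eq_one.1 (T.leaf_deg l)).choose

lemma neighborSet_leaf (l : L) : T.G.neighborSet (T.leaf l) = {T.parent l} :=
  (Set.ncard_eq_one.1 (T.leaf_deg l)).choose_spec

lemma adj_parent (l : L) : T.G.Adj (T.leaf l) (T.parent l) := by
  rw [← mem_neighborSet, neighborSet_leaf]
  rfl

lemma eq_parent_of_adj {l : L} {v : T.V} (h : T.G.Adj (T.leaf l) v) : v = T.parent l := by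
  rwa [← mem_neighborSet, neighborSet_leaf] at h

lemma parent_mem_interval {l : L} {v : T.V} (h : T.leaf l ≠ v) :
    T.parent l ∈ T.G.interval (T.leaf l) v := by
  intro p
  cases p with
  | nil => exact absurd rfl h
  | cons hadj q => exact List.mem_cons_of_mem _ (T.eq_parent_of_adj hadj ▸ q.start_mem_support)

lemma parent_mem_interval_left {i j : L} (h : i ≠ j) :
    T.parent i ∈ T.G.interval (T.leaf i) (T.leaf j) :=
  T.parent_mem_interval fun he => h (T.leaf_inj he)

lemma parent_mem_interval_right {i j : L} (h : i ≠ j) :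
    T.parent j ∈ T.G.interval (T.leaf i) (T.leaf j) := by
  rw [interval_comm]
  exact T.parent_mem_interval_left h.symm

lemma parent_ne_parent_of_splits {i j k l : L}
    (h : T.G.Splits (T.leaf i) (T.leaf j) (T.leaf k) (T.leaf l)) (hij : i ≠ j) (hkl : k ≠ l) :
    T.parent j ≠ T.parent k := fun he =>
  Set.disjoint_left.1 h (T.parent_mem_interval_right hij) (he ▸ T.parent_mem_interval_left hkl)

lemma isInterior_of_mem_interval {u v x : T.V} (hx : x ∈ T.G.interval u v) (hu : x ≠ u)
    (hv : x ≠ v) : T.IsInterior x := by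
  have := T.finV
  rintro ⟨l, rfl⟩
  obtain ⟨p, hp⟩ := T.isTree.exists_isPath u v
  obtain ⟨i, hi, hil⟩ := Walk.mem_support_iff_exists_getVert.1 (hx p)
  have h₀ : i ≠ 0 := by rintro rfl; exact hu (by simpa using hi.symm)
  have hlt : i < p.length := lt_of_le_of_ne hil (by rintro rfl; exact hv (by simpa using hi.symm))
  have h₂ := hp.ncard_neighborSet_toSubgraph_internal_eq_two h₀ hlt
  rw [hi] at h₂
  have := Set.ncard_le_ncard (p.toSubgraph.neighborSet_subset (T.leaf l)) (Set.toFinite _)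
  rw [T.leaf_deg] at this
  omega

lemma isInterior_parent (hL : ∀ l j : L, ∃ o, o ≠ l ∧ o ≠ j) (l : L) :
    T.IsInterior (T.parent l) := by
  rintro ⟨j, hj⟩
  obtain ⟨o, hol, hoj⟩ := hL l j
  refine T.isInterior_of_mem_interval (T.parent_mem_interval_left hol.symm) ?_ ?_ ⟨j, hj⟩
  · exact (T.adj_parent l).ne'
  · exact hj ▸ fun h => hoj (T.leaf_inj h).symm

lemma adj_of_isInterior_mem_interval {u v x y : T.V} (hx : x ∈ T.G.interval u v)
    (hy : y ∈ T.G.interval u v) (hxy : x ≠ y)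
    (h : ∀ z ∈ T.G.interval u v, T.IsInterior z → z = x ∨ z = y) : T.G.Adj x y := by
  refine T.isTree.adj_of_interval_subset hxy fun z hz => ?_
  by_contra hz'
  simp only [Set.mem_insert_iff, Set.mem_singleton_iff, not_or] at hz'
  exact (h z (T.isTree.interval_subset_interval hx hy hz)
    (T.isInterior_of_mem_interval hz hz'.1 hz'.2)).elim hz'.1 hz'.2

lemma ncard_interior_add_two_le : {v | T.IsInterior v}.ncard + 2 ≤ Nat.card L := by
  classical
  have := T.finV
  have := Fintype.ofFinite T.V
  have : Fintype L := Fintype.ofInjective T.leaf T.leaf_inj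
  have hI : {v | T.IsInterior v}.ncard = (Finset.univ.filter T.IsInterior).card := by
    rw [← Set.ncard_coe_finset, Finset.coe_filter]
    simp
  have hleaves : (Finset.univ.filter fun v => ¬ T.IsInterior v) = Finset.univ.image T.leaf := by
    ext v
    simp [IsInterior]
  have hcard := Finset.card_filter_add_card_filter_not (s := Finset.univ) T.IsInterior
  rw [hleaves, Finset.card_image_of_injective _ T.leaf_inj, Finset.card_univ,
    Finset.card_univ] at hcard
  have hsplit := Finset.sum_filter_add_sum_filter_not Finset.univ T.IsInterior (T.G.degree ·)
  rw [hleaves, Finset.sum_image fun _ _ _ _ h => T.leaf_inj h] at hsplit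
  have hdeg : ∑ v, T.G.degree v + 2 = 2 * Fintype.card T.V := by
    rw [T.G.sum_degrees_eq_twice_card_edges, ← T.isTree.card_edgeFinset]
    ring
  have hleaf : ∑ l, T.G.degree (T.leaf l) = Fintype.card L := by
    simp [← T.G.ncard_neighborSet_eq_degree, T.leaf_deg]
  have hint : (Finset.univ.filter T.IsInterior).card * 3 ≤
      ∑ v ∈ Finset.univ.filter T.IsInterior, T.G.degree v :=
    Finset.card_nsmul_le_sum _ _ 3 fun v hv =>
      T.G.ncard_neighborSet_eq_degree v ▸ T.interior_deg v (Finset.mem_filter.1 hv).2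
  rw [Nat.card_eq_fintype_card, hI]
  linarith

lemma mem_of_isInterior {s : Finset T.V} (hs : ∀ v ∈ s, T.IsInterior v)
    (hcard : Nat.card L ≤ s.card + 2) {v : T.V} (hv : T.IsInterior v) : v ∈ s := by
  classical
  have := T.finV
  by_contra hvs
  have hsub : (↑(insert v s) : Set T.V) ⊆ {v | T.IsInterior v} := by
    simpa [Set.insert_subset_iff] using ⟨hv, hs⟩
  have := Set.ncard_le_ncard hsub
  rw [Set.ncard_coe_finset, Finset.card_insert_of_notMem hvs] at this
  have := T.ncard_interior_add_two_le
  omega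

noncomputable def catMap {n : ℕ} (T : PhyloTree (Fin n)) : Fin n ⊕ Fin (n - 2) → T.V :=
  Sum.elim T.leaf fun j => T.parent ⟨j + 1, by omega⟩

end PhyloTree

section Caterpillar

variable {n : ℕ}

lemma IsCatWith.splits {T : PhyloTree (Fin n)} {σ : Fin n → Fin n} (h : IsCatWith T σ)
    {a b c d : Fin n} (hsep : max (catPos n a) (catPos n b) < min (catPos n c) (catPos n d)) :
    T.G.Splits (T.leaf (σ a)) (T.leaf (σ b)) (T.leaf (σ c)) (T.leaf (σ d)) := by
  obtain ⟨φ, hφ, hleaf⟩ := h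
  let e : T.G ≃g catGraph n := ⟨φ, fun {u v} => (hφ u v).symm⟩
  have hl : ∀ k, e.symm (.inl k) = T.leaf (σ k) := fun k => e.symm_apply_eq.2 (hleaf k).symm
  rw [← hl, ← hl, ← hl, ← hl]
  exact e.symm.splits (catGraph.splits hsep)

lemma IsCatWith.piso {T₁ T₂ : PhyloTree (Fin n)} {σ : Fin n → Fin n} (h₁ : IsCatWith T₁ σ)
    (h₂ : IsCatWith T₂ σ) (hσ : Function.Surjective σ) : PIso T₁ T₂ := by
  obtain ⟨φ₁, hφ₁, hl₁⟩ := h₁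
  obtain ⟨φ₂, hφ₂, hl₂⟩ := h₂
  refine ⟨φ₁.trans φ₂.symm, fun a b => by simp [hφ₁, hφ₂], fun l => ?_⟩
  obtain ⟨k, rfl⟩ := hσ l
  simp [hl₁, ← hl₂]

lemma IsCatWith.of_piso {T₁ T₂ : PhyloTree (Fin n)} {σ : Fin n → Fin n} (hp : PIso T₁ T₂)
    (h : IsCatWith T₂ σ) : IsCatWith T₁ σ := by
  obtain ⟨ψ, hψ, hψl⟩ := hp
  obtain ⟨φ, hφ, hφl⟩ := h
  exact ⟨ψ.trans φ, fun a b => (hψ a b).trans (hφ _ _), fun k => by simp [hψl, hφl]⟩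

/-- The caterpillar carrying leaf `σ k` at position `k` has both leaves of one side of `q`
strictly before both leaves of the other side on its spine. -/
def CatDisplays (σ : Equiv.Perm (Fin n)) (q : Quartet (Fin n)) : Prop :=
  let p := fun l => catPos n (σ.symm l)
  max (p q.1) (p q.2.1) < min (p q.2.2.1) (p q.2.2.2) ∨
    max (p q.2.2.1) (p q.2.2.2) < min (p q.1) (p q.2.1)

instance (σ : Equiv.Perm (Fin n)) (q : Quartet (Fin n)) : Decidable (CatDisplays σ q) :=
  inferInstanceAs (Decidable (_ ∨ _))

lemma IsCatWith.splits_of_catDisplays {T : PhyloTree (Fin n)} {σ : Equiv.Perm (Fin n)}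
    (h : IsCatWith T σ) {u v w x : Fin n} (hq : CatDisplays σ (u, v, w, x)) :
    T.G.Splits (T.leaf u) (T.leaf v) (T.leaf w) (T.leaf x) := by
  rcases hq with hq | hq
  · simpa using h.splits hq
  · simpa using (h.splits hq).symm

lemma IsCatWith.displaysSet {T : PhyloTree (Fin n)} {σ : Equiv.Perm (Fin n)}
    (h : IsCatWith T σ) {Q : Set (Quartet (Fin n))} (hQ : ∀ q ∈ Q, CatDisplays σ q) :
    T.DisplaysSet Q :=
  fun _ hq => (displays_iff_splits T).2 (h.splits_of_catDisplays (hQ _ hq))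

lemma IsCatWith.not_piso {T₁ T₂ : PhyloTree (Fin n)} {σ τ : Equiv.Perm (Fin n)}
    (h₁ : IsCatWith T₁ σ) (h₂ : IsCatWith T₂ τ) {u v w x : Fin n}
    (hσ : CatDisplays σ (u, v, w, x)) (hτ : CatDisplays τ (u, w, v, x)) : ¬ PIso T₁ T₂ :=
  fun hp => T₁.isTree.not_splits_of_splits (h₁.splits_of_catDisplays hσ)
    ((h₂.of_piso hp).splits_of_catDisplays hτ)

end Caterpillar

def catTree (σ : Equiv.Perm (Fin 6)) : PhyloTree (Fin 6) where
  V := Fin 6 ⊕ Fin (6 - 2)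
  finV := inferInstance
  G := catGraph 6
  isTree := catGraph.isTree_six
  leaf l := .inl (σ.symm l)
  leaf_inj := Sum.inl_injective.comp σ.symm.injective
  leaf_deg l := by
    rw [ncard_neighborSet_eq_degree, catGraph.degree_six_inl]
  leaf_of_deg_one
    | .inl k, _ => ⟨σ k, by simp⟩
    | .inr j, h => by
      rw [ncard_neighborSet_eq_degree, catGraph.degree_six_inr] at h
      exact absurd h (by norm_num)
  interior_deg
    | .inl k, h => absurd ⟨σ k, by simp⟩ h
    | .inr j, _ => by rw [ncard_neighborSet_eq_degree, catGraph.degree_six_inr]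

lemma isCatWith_catTree (σ : Equiv.Perm (Fin 6)) : IsCatWith (catTree σ) σ :=
  ⟨Equiv.refl _, fun _ _ => Iff.rfl, fun k => congrArg Sum.inl (σ.symm_apply_apply k)⟩

lemma not_defines_of_catDisplays {T : PhyloTree (Fin 6)} {τ : Equiv.Perm (Fin 6)}
    (hT : IsCatWith T τ) {Q : Set (Quartet (Fin 6))} (σ : Equiv.Perm (Fin 6))
    (hQ : ∀ q ∈ Q, CatDisplays σ q) {u v w x : Fin 6} (hσ : CatDisplays σ (u, v, w, x))
    (hτ : CatDisplays τ (u, w, v, x)) : ¬ Defines Q T :=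
  fun h => (isCatWith_catTree σ).not_piso hT hσ hτ (h.2 _ ((isCatWith_catTree σ).displaysSet hQ))

section Q6

variable {T : PhyloTree (Fin 6)} (hQ : T.DisplaysSet Q6)
include hQ

lemma splits_Q6_0i_j5 {i j : Fin 6} (hi : 1 ≤ i) (hij : i < j) (hj : j ≤ 4) :
    T.G.Splits (T.leaf 0) (T.leaf i) (T.leaf j) (T.leaf 5) := by
  have hT := T.isTree
  have hQ' : ∀ {i j k l : Fin 6}, (i, j, k, l) ∈ Q6 →
      T.G.Splits (T.leaf i) (T.leaf j) (T.leaf k) (T.leaf l) :=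
    fun h => (displays_iff_splits T).1 (hQ _ h)
  have s01_24 := hQ' (i := 0) (j := 1) (k := 2) (l := 4) (by simp [Q6])
  have s02_35 := hQ' (i := 0) (j := 2) (k := 3) (l := 5) (by simp [Q6])
  have s01_45 := hQ' (i := 0) (j := 1) (k := 4) (l := 5) (by simp [Q6])
  have s13_45 := hQ' (i := 1) (j := 3) (k := 4) (l := 5) (by simp [Q6])
  have s01_25 := hT.splits_trans_right s01_24 s01_45
  have s03_45 := hT.splits_trans_left s01_45 s13_45
  have s01_35 := (hT.splits_dyadic s02_35.symm.swap_left.swap_right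
    s01_25.symm.swap_left).swap_left.symm
  have s02_45 := (hT.splits_dyadic s02_35 s03_45.swap_right).swap_right
  fin_cases i <;> fin_cases j <;> simp at hi hij hj ⊢
  exacts [s01_25, s01_35, s01_45, s02_35, s02_45, s03_45]

lemma splits_Q6_01_23 : T.G.Splits (T.leaf 0) (T.leaf 1) (T.leaf 2) (T.leaf 3) :=
  (T.isTree.splits_trans_left (splits_Q6_0i_j5 hQ (by decide) (by decide) (by decide)).symm
    (splits_Q6_0i_j5 hQ (i := 1) (j := 3) (by decide) (by decide) (by decide)).symm.swap_left).symm

lemma splits_Q6_23_45 : T.G.Splits (T.leaf 2) (T.leaf 3) (T.leaf 4) (T.leaf 5) :=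
  T.isTree.splits_trans_left
    (splits_Q6_0i_j5 hQ (i := 2) (j := 4) (by decide) (by decide) (by decide)).swap_left
    (splits_Q6_0i_j5 hQ (i := 3) (j := 4) (by decide) (by decide) (by decide))

lemma parent_ne_Q6 {i j : Fin 6} (hi : 1 ≤ i) (hij : i < j) (hj : j ≤ 4) :
    T.parent i ≠ T.parent j := by
  refine T.parent_ne_parent_of_splits (splits_Q6_0i_j5 hQ hi hij hj) ?_ ?_
  · rintro rfl
    exact absurd hi (by decide)
  · rintro rfl
    exact absurd hj (by decide)

lemma eq_parent_of_isInterior_Q6 {v : T.V} (hv : T.IsInterior v) :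
    v = T.parent 1 ∨ v = T.parent 2 ∨ v = T.parent 3 ∨ v = T.parent 4 := by
  classical
  have hne := fun i j hi hij hj => parent_ne_Q6 hQ (i := i) (j := j) hi hij hj
  have hint := T.isInterior_parent (by decide)
  simpa using T.mem_of_isInterior (s := {T.parent 1, T.parent 2, T.parent 3, T.parent 4})
    (by simp [hint]) (by
      rw [Finset.card_insert_of_notMem, Finset.card_insert_of_notMem,
        Finset.card_pair (hne 3 4 (by decide) (by decide) (by decide))] <;>
      simp [hne, Nat.card_eq_fintype_card]) hv

lemma parent_zero_Q6 : T.parent 0 = T.parent 1 := by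
  rcases eq_parent_of_isInterior_Q6 hQ (T.isInterior_parent (by decide) 0) with h | h | h | h
  · exact h
  all_goals exact absurd h (T.parent_ne_parent_of_splits
    (splits_Q6_0i_j5 hQ (i := 1) (by decide) (by decide) (by decide)).swap_left
    (by decide) (by decide))

lemma parent_five_Q6 : T.parent 5 = T.parent 4 := by
  rcases eq_parent_of_isInterior_Q6 hQ (T.isInterior_parent (by decide) 5) with h | h | h | h
  rotate_right
  · exact h
  all_goals exact absurd h.symm (T.parent_ne_parent_of_splits
    (splits_Q6_0i_j5 hQ (j := 4) (by decide) (by decide) (by decide)).swap_right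
    (by decide) (by decide))

lemma adj_parent_one_two_Q6 : T.G.Adj (T.parent 1) (T.parent 2) := by
  refine T.adj_of_isInterior_mem_interval (u := T.leaf 0) (v := T.leaf 2)
    (parent_zero_Q6 hQ ▸ T.parent_mem_interval_left (by decide))
    (T.parent_mem_interval_right (by decide)) (parent_ne_Q6 hQ (by decide) (by decide) (by decide))
    fun z hz hzi => ?_
  rcases eq_parent_of_isInterior_Q6 hQ hzi with rfl | rfl | rfl | rfl
  · exact Or.inl rfl
  · exact Or.inr rfl
  · exact absurd hz (Set.disjoint_right.1 (splits_Q6_0i_j5 hQ (i := 2) (j := 3)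
      (by decide) (by decide) (by decide)) (T.parent_mem_interval_left (by decide)))
  · exact absurd hz (Set.disjoint_right.1 (splits_Q6_0i_j5 hQ (i := 2) (j := 4)
      (by decide) (by decide) (by decide)) (T.parent_mem_interval_left (by decide)))

lemma adj_parent_two_three_Q6 : T.G.Adj (T.parent 2) (T.parent 3) := by
  refine T.adj_of_isInterior_mem_interval (u := T.leaf 2) (v := T.leaf 3)
    (T.parent_mem_interval_left (by decide)) (T.parent_mem_interval_right (by decide))
    (parent_ne_Q6 hQ (by decide) (by decide) (by decide)) fun z hz hzi => ?_
  rcases eq_parent_of_isInterior_Q6 hQ hzi with rfl | rfl | rfl | rfl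
  · exact absurd hz (Set.disjoint_left.1 (splits_Q6_01_23 hQ)
      (T.parent_mem_interval_right (by decide)))
  · exact Or.inl rfl
  · exact Or.inr rfl
  · exact absurd hz (Set.disjoint_right.1 (splits_Q6_23_45 hQ)
      (T.parent_mem_interval_left (by decide)))

lemma adj_parent_three_four_Q6 : T.G.Adj (T.parent 3) (T.parent 4) := by
  refine T.adj_of_isInterior_mem_interval (u := T.leaf 3) (v := T.leaf 5)
    (T.parent_mem_interval_left (by decide))
    (parent_five_Q6 hQ ▸ T.parent_mem_interval_right (by decide))
    (parent_ne_Q6 hQ (by decide) (by decide) (by decide)) fun z hz hzi => ?_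
  rcases eq_parent_of_isInterior_Q6 hQ hzi with rfl | rfl | rfl | rfl
  · exact absurd hz (Set.disjoint_left.1 (splits_Q6_0i_j5 hQ (i := 1) (j := 3)
      (by decide) (by decide) (by decide)) (T.parent_mem_interval_right (by decide)))
  · exact absurd hz (Set.disjoint_left.1 (splits_Q6_0i_j5 hQ (i := 2) (j := 3)
      (by decide) (by decide) (by decide)) (T.parent_mem_interval_right (by decide)))
  · exact Or.inl rfl
  · exact Or.inr rfl

lemma catMap_adj_Q6 (s t : Fin 6 ⊕ Fin (6 - 2)) (h : (catGraph 6).Adj s t) :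
    T.G.Adj (T.catMap s) (T.catMap t) := by
  have hleaf : ∀ k : Fin 6,
      T.G.Adj (T.leaf k) (T.catMap (.inr ⟨catPos 6 k, catPos_lt (by norm_num) k⟩)) := by
    intro k
    convert T.adj_parent k using 1
    fin_cases k
    exacts [(parent_zero_Q6 hQ).symm, rfl, rfl, rfl, rfl, (parent_five_Q6 hQ).symm]
  have hspine : ∀ j j' : Fin (6 - 2), (j : ℕ) + 1 = j' →
      T.G.Adj (T.catMap (.inr j)) (T.catMap (.inr j')) := by
    intro j j' h
    fin_cases j <;> fin_cases j' <;> simp at h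
    exacts [adj_parent_one_two_Q6 hQ, adj_parent_two_three_Q6 hQ, adj_parent_three_four_Q6 hQ]
  rcases s with k | j <;> rcases t with k' | j'
  · exact h.elim
  · have : j' = ⟨catPos 6 k, catPos_lt (by norm_num) k⟩ := Fin.ext h
    exact this ▸ hleaf k
  · have : j = ⟨catPos 6 k', catPos_lt (by norm_num) k'⟩ := Fin.ext h
    exact this ▸ (hleaf k').symm
  · rcases h with h | h
    exacts [hspine j j' h, (hspine j' j h).symm]

lemma catMap_bijective_Q6 : Function.Bijective T.catMap := by
  have hint := T.isInterior_parent (by decide)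
  refine ⟨?_, fun v => ?_⟩
  · rintro (k | j) (k' | j') h
    · exact congrArg _ (T.leaf_inj h)
    · exact absurd ⟨k, h⟩ (hint _)
    · exact absurd ⟨k', h.symm⟩ (hint _)
    · rcases lt_trichotomy j j' with hlt | rfl | hgt
      · exact absurd h (parent_ne_Q6 hQ (by rw [Fin.le_iff_val_le_val]; simp)
          (by simpa using hlt) (by rw [Fin.le_iff_val_le_val]; simp))
      · rfl
      · exact absurd h.symm (parent_ne_Q6 hQ (by rw [Fin.le_iff_val_le_val]; simp)
          (by simpa using hgt) (by rw [Fin.le_iff_val_le_val]; simp))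
  · by_cases hv : T.IsInterior v
    · rcases eq_parent_of_isInterior_Q6 hQ hv with rfl | rfl | rfl | rfl
      exacts [⟨.inr 0, rfl⟩, ⟨.inr 1, rfl⟩, ⟨.inr 2, rfl⟩, ⟨.inr 3, rfl⟩]
    · obtain ⟨l, rfl⟩ := not_not.1 hv
      exact ⟨.inl l, rfl⟩

theorem isCaterpillar_of_displaysSet_Q6 : IsCaterpillar T := by
  let e := Equiv.ofBijective T.catMap (catMap_bijective_Q6 hQ)
  -- The caterpillar edges land on edges of `T`, and a connected subgraph of a tree is all of it.
  have hG : (catGraph 6).map e.toEmbedding = T.G :=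
    T.isTree.isAcyclic.eq_of_le_of_connected
      ((map_le_iff_le_comap _ _ _).2 fun s t h => catMap_adj_Q6 hQ s t h)
      ((Iso.map e _).connected_iff.1 (catGraph.connected (by norm_num)))
  refine ⟨e.symm, fun a b => ?_, fun k => e.symm_apply_eq.2 rfl⟩
  obtain ⟨a, rfl⟩ := e.surjective a
  obtain ⟨b, rfl⟩ := e.surjective b
  rw [← hG, e.symm_apply_apply, e.symm_apply_apply]
  exact map_adj_apply (f := e.toEmbedding)

end Q6

lemma forall_mem_Q6 {P : Quartet (Fin 6) → Prop}
    (h : ∀ q ∈ [((0 : Fin 6), (1 : Fin 6), (2 : Fin 6), (4 : Fin 6)), (0, 2, 3, 5), (0, 1, 4, 5),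
      (1, 3, 4, 5)], P q) :
    ∀ q ∈ Q6, P q := by
  intro q hq
  simp only [Q6, Set.mem_insert_iff, Set.mem_singleton_iff] at hq
  exact h q (by simpa using hq)

lemma forall_mem_Q6_sdiff {P : Quartet (Fin 6) → Prop} {q₀ : Quartet (Fin 6)}
    (h : ∀ q ∈ [((0 : Fin 6), (1 : Fin 6), (2 : Fin 6), (4 : Fin 6)), (0, 2, 3, 5), (0, 1, 4, 5),
      (1, 3, 4, 5)], q ≠ q₀ → P q) :
    ∀ q ∈ Q6 \ {q₀}, P q :=
  fun q hq => forall_mem_Q6 h q hq.1 hq.2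

def permSigma' : Equiv.Perm (Fin 6) := ⟨sigma', ![3, 0, 5, 1, 4, 2], by decide, by decide⟩

/-- `Q6` is minimally definitive for `T6`; moreover the tree `T'` (caterpillar
shape with leaf order `2,4 | 6 | 1 | 5,3`) displays `Q6 - 12|56` and is not
isomorphic to `T6`. -/
theorem stmt15 (T : PhyloTree (Fin 6)) (hT : IsCaterpillar T) :
    PhyloTree.Defines Q6 T ∧
    (∀ q ∈ Q6, ¬ PhyloTree.Defines (Q6 \ {q}) T) ∧
    (∀ T' : PhyloTree (Fin 6), IsCatWith T' sigma' →
      T'.DisplaysSet (Q6 \ {((0 : Fin 6), (1 : Fin 6), (4 : Fin 6), (5 : Fin 6))}) ∧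
      ¬ PhyloTree.PIso T' T) := by
  have hT' : IsCatWith T (Equiv.refl (Fin 6)) := hT
  refine ⟨⟨hT'.displaysSet (forall_mem_Q6 (by decide +kernel)), fun T' h =>
    (isCaterpillar_of_displaysSet_Q6 h).piso hT Function.surjective_id⟩, fun q hq => ?_,
    fun T' h => ?_⟩
  · simp only [Q6, Set.mem_insert_iff, Set.mem_singleton_iff] at hq
    rcases hq with rfl | rfl | rfl | rfl
    · exact not_defines_of_catDisplays hT' (Equiv.swap 1 2)
        (forall_mem_Q6_sdiff (by decide +kernel)) (u := 0) (v := 2) (w := 1) (x := 4)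
        (by decide) (by decide)
    · exact not_defines_of_catDisplays hT' (Equiv.swap 2 3)
        (forall_mem_Q6_sdiff (by decide +kernel)) (u := 0) (v := 3) (w := 2) (x := 5)
        (by decide) (by decide)
    · exact not_defines_of_catDisplays hT' permSigma'
        (forall_mem_Q6_sdiff (by decide +kernel)) (u := 1) (v := 3) (w := 0) (x := 2)
        (by decide) (by decide)
    · exact not_defines_of_catDisplays hT' (Equiv.swap 3 4)
        (forall_mem_Q6_sdiff (by decide +kernel)) (u := 2) (v := 4) (w := 3) (x := 5)
        (by decide) (by decide)
  · have h' : IsCatWith T' permSigma' := h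
    exact ⟨h'.displaysSet (forall_mem_Q6_sdiff (by decide +kernel)),
      h'.not_piso hT' (u := 1) (v := 3) (w := 0) (x := 2) (by decide) (by decide)⟩
end
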